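/- arXiv:1811.08529 — 7 statements merged into one kernel-verified Lean document; each statement's English description precedes it below -/
import Mathlib

section
/- Let P₁, P₂ ⊆ ℝ^d be polytopes with P_i = π_i({y ∈ ℝ^{m_i} : A^i y ≤ b^i}) for linear maps π_i : ℝ^{m_i} → ℝ^d. Then conv(P₁ ∪ P₂) = {x ∈ ℝ^d : ∃ y¹ ∈ ℝ^{m₁}, y² ∈ ℝ^{m₂}, λ ∈ ℝ such that x = π₁(y¹) + π₂(y²), A¹y¹ ≤ λb¹, A²y² ≤ (1−λ)b², 0 ≤ λ ≤ 1}. -/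
/-!
`conv(P₁ ∪ P₂)` is the union of the segments joining `P₁` to `P₂`, i.e. the union over
`l ∈ [0, 1]` of `l • P₁ + (1 - l) • P₂`, so it suffices that `l • Pᵢ = πᵢ {y | Aᵢ y ≤ l • bᵢ}`
for `l ≥ 0`. For `l > 0` this is rescaling `y`. For `l = 0` both sides are `{0}`: the left one
since `Pᵢ` is nonempty, the right one since any `y` with `Aᵢ y ≤ 0` is a recession direction of
`{y | Aᵢ y ≤ bᵢ}`, which `πᵢ` must kill because `Pᵢ` is bounded.
-/

open Set Pointwise Bornology

lemma eq_zero_of_isBounded_image_of_forall_add_smul_mem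
    {E F : Type*} [AddCommGroup E] [Module ℝ E] [NormedAddCommGroup F] [NormedSpace ℝ F]
    (π : E →ₗ[ℝ] F) {S : Set E} (hS : IsBounded (π '' S)) {z y : E}
    (hray : ∀ t : ℝ, 0 ≤ t → z + t • y ∈ S) : π y = 0 := by
  obtain ⟨C, hC⟩ := isBounded_iff_forall_norm_le.mp hS
  have hz : z ∈ S := by simpa using hray 0 le_rfl
  have hC₀ : 0 ≤ C := (norm_nonneg _).trans (hC _ (mem_image_of_mem π hz))
  have hbound (t : ℝ) (ht : 0 ≤ t) : t * ‖π y‖ ≤ 2 * C :=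
    calc t * ‖π y‖ = ‖π (z + t • y) - π z‖ := by simp [norm_smul, abs_of_nonneg ht]
      _ ≤ ‖π (z + t • y)‖ + ‖π z‖ := norm_sub_le _ _
      _ ≤ C + C := add_le_add (hC _ (mem_image_of_mem π (hray t ht)))
          (hC _ (mem_image_of_mem π hz))
      _ = 2 * C := by ring
  by_contra hne
  have hpos : 0 < ‖π y‖ := norm_pos_iff.mpr hne
  have := hbound ((2 * C + 1) / ‖π y‖) (by positivity)
  rw [div_mul_cancel₀ _ hpos.ne'] at this
  linarith

section Polyhedron

variable {E M : Type*} [AddCommGroup E] [Module ℝ E] [AddCommGroup M] [PartialOrder M]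

lemma convex_setOf_le [IsOrderedAddMonoid M] [Module ℝ M] [PosSMulMono ℝ M]
    (f : E →ₗ[ℝ] M) (b : M) : Convex ℝ {y | f y ≤ b} :=
  (convex_Iic b).linear_preimage f

lemma setOf_le_smul_eq_smul_setOf_le [Module ℝ M] [PosSMulMono ℝ M] [PosSMulReflectLE ℝ M]
    (f : E →ₗ[ℝ] M) (b : M) {l : ℝ} (hl : 0 < l) : {y | f y ≤ l • b} = l • {y | f y ≤ b} := by
  ext y
  simp only [mem_smul_set_iff_inv_smul_mem₀ hl.ne', mem_ofPred_eq, map_smul,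
    inv_smul_le_iff_of_pos hl]

lemma map_eq_zero_of_le_zero [IsOrderedAddMonoid M] [Module ℝ M] [PosSMulMono ℝ M]
    {F : Type*} [NormedAddCommGroup F] [NormedSpace ℝ F] (f : E →ₗ[ℝ] M) (b : M)
    (π : E →ₗ[ℝ] F) (hne : {y | f y ≤ b}.Nonempty) (hbd : IsBounded (π '' {y | f y ≤ b}))
    {y : E} (hy : f y ≤ 0) : π y = 0 := by
  obtain ⟨z, hz⟩ := hne
  refine eq_zero_of_isBounded_image_of_forall_add_smul_mem π hbd (z := z) fun t ht ↦ ?_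
  simpa [mem_ofPred_eq, map_add, map_smul] using add_le_of_le_of_nonpos hz
    (smul_nonpos_of_nonneg_of_nonpos ht hy)

lemma image_setOf_le_smul [IsOrderedAddMonoid M] [Module ℝ M] [PosSMulMono ℝ M]
    [PosSMulReflectLE ℝ M] {F : Type*} [NormedAddCommGroup F] [NormedSpace ℝ F]
    (f : E →ₗ[ℝ] M) (b : M) (π : E →ₗ[ℝ] F) (hne : {y | f y ≤ b}.Nonempty)
    (hbd : IsBounded (π '' {y | f y ≤ b})) {l : ℝ} (hl : 0 ≤ l) :
    π '' {y | f y ≤ l • b} = l • π '' {y | f y ≤ b} := by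
  rcases hl.eq_or_lt with rfl | hl
  · rw [zero_smul_set (hne.image π), zero_smul]
    refine Subset.antisymm ?_ (singleton_subset_iff.mpr ⟨0, by simp, map_zero π⟩)
    rintro _ ⟨y, hy, rfl⟩
    exact map_eq_zero_of_le_zero f b π hne hbd hy
  · rw [setOf_le_smul_eq_smul_setOf_le f b hl, image_smul_set]

end Polyhedron

lemma convexJoin_eq_iUnion_smul_add_smul {E : Type*} [AddCommGroup E] [Module ℝ E]
    (s t : Set E) : convexJoin ℝ s t = ⋃ l ∈ Icc (0 : ℝ) 1, l • s + (1 - l) • t := by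
  ext x
  simp only [mem_convexJoin, segment, mem_iUnion, mem_Icc, mem_add, mem_smul_set,
    mem_ofPred_eq, exists_prop]
  constructor
  · rintro ⟨p, hp, q, hq, a, c, ha, hc, hac, rfl⟩
    obtain rfl : c = 1 - a := by linarith
    exact ⟨a, ⟨ha, by linarith⟩, _, ⟨p, hp, rfl⟩, _, ⟨q, hq, rfl⟩, rfl⟩
  · rintro ⟨l, ⟨hl₀, hl₁⟩, _, ⟨p, hp, rfl⟩, _, ⟨q, hq, rfl⟩, rfl⟩
    exact ⟨p, hp, q, hq, l, 1 - l, hl₀, by linarith, by ring, rfl⟩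

/-- **Balas' theorem** on the union of two polytopes, each given as the image of a
polyhedron `{y : Aᵢ y ≤ bᵢ}` under a linear map `πᵢ`. -/
theorem balas_union_of_polytopes
    {d m₁ m₂ k₁ k₂ : ℕ}
    (A₁ : Matrix (Fin k₁) (Fin m₁) ℝ) (b₁ : Fin k₁ → ℝ)
    (A₂ : Matrix (Fin k₂) (Fin m₂) ℝ) (b₂ : Fin k₂ → ℝ)
    (π₁ : (Fin m₁ → ℝ) →ₗ[ℝ] (Fin d → ℝ))
    (π₂ : (Fin m₂ → ℝ) →ₗ[ℝ] (Fin d → ℝ))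
    (h₁ne : {y | A₁.mulVec y ≤ b₁}.Nonempty)
    (h₂ne : {y | A₂.mulVec y ≤ b₂}.Nonempty)
    (h₁bd : Bornology.IsBounded (π₁ '' {y | A₁.mulVec y ≤ b₁}))
    (h₂bd : Bornology.IsBounded (π₂ '' {y | A₂.mulVec y ≤ b₂})) :
    convexHull ℝ (π₁ '' {y | A₁.mulVec y ≤ b₁} ∪ π₂ '' {y | A₂.mulVec y ≤ b₂}) =
      {x | ∃ (y₁ : Fin m₁ → ℝ) (y₂ : Fin m₂ → ℝ) (l : ℝ),
        x = π₁ y₁ + π₂ y₂ ∧ A₁.mulVec y₁ ≤ l • b₁ ∧ A₂.mulVec y₂ ≤ (1 - l) • b₂ ∧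
        0 ≤ l ∧ l ≤ 1} := by
  simp only [← Matrix.mulVecLin_apply] at *
  have hP₁ := (convex_setOf_le A₁.mulVecLin b₁).linear_image π₁
  have hP₂ := (convex_setOf_le A₂.mulVecLin b₂).linear_image π₂
  calc
    _ = ⋃ l ∈ Icc (0 : ℝ) 1, l • π₁ '' {y | A₁.mulVecLin y ≤ b₁} +
        (1 - l) • π₂ '' {y | A₂.mulVecLin y ≤ b₂} := by
      rw [hP₁.convexHull_union hP₂ (h₁ne.image π₁) (h₂ne.image π₂),
        convexJoin_eq_iUnion_smul_add_smul]
    _ = ⋃ l ∈ Icc (0 : ℝ) 1, π₁ '' {y | A₁.mulVecLin y ≤ l • b₁} +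
        π₂ '' {y | A₂.mulVecLin y ≤ (1 - l) • b₂} :=
      iUnion₂_congr fun l hl ↦ by
        rw [image_setOf_le_smul _ _ π₁ h₁ne h₁bd hl.1,
          image_setOf_le_smul _ _ π₂ h₂ne h₂bd (sub_nonneg.mpr hl.2)]
    _ = _ := by
      ext x
      simp only [mem_iUnion, mem_Icc, mem_add, mem_image, mem_ofPred_eq, exists_prop]
      constructor
      · rintro ⟨l, ⟨hl₀, hl₁⟩, _, ⟨y₁, hy₁, rfl⟩, _, ⟨y₂, hy₂, rfl⟩, rfl⟩
        exact ⟨y₁, y₂, l, rfl, hy₁, hy₂, hl₀, hl₁⟩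
      · rintro ⟨y₁, y₂, l, rfl, hy₁, hy₂, hl₀, hl₁⟩
        exact ⟨l, ⟨hl₀, hl₁⟩, _, ⟨y₁, hy₁, rfl⟩, _, ⟨y₂, hy₂, rfl⟩, rfl⟩
end

section
/- Let Q ⊆ ℝ^n be a non-empty polyhedron with Q = {y : ∃ z, Ay + Bz ≤ b, Cy + Dz = d}, and let γ ∈ ℝ. Then {x : xᵀy ≤ γ for all y ∈ Q} = {x : ∃ λ ≥ 0, μ such that Aᵀλ + Cᵀμ = x, Bᵀλ + Dᵀμ = 0, bᵀλ + dᵀμ ≤ γ}. -/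
/-!
The inclusion `⊇` is weak duality. For `⊆`, homogenize: if `(x, 0, γ)` were not a nonnegative
combination of the vectors `(Aᵢ, Bᵢ, bᵢ)` and `(0, 0, 1)` plus an arbitrary combination of the
`(Cⱼ, Dⱼ, dⱼ)`, Farkas' lemma would give `(Y, Z, s)` with `s ≥ 0`,
`AY + BZ + sb ≥ 0`, `CY + DZ + sd = 0` and `x ⬝ Y + sγ < 0`. For `s > 0` the point
`-Y / s` lies in `Q` (with `z = -Z / s`) and violates `x ⬝ y ≤ γ`; for `s = 0` the vector
`-(Y, Z)` is a recession direction of the non-empty lifted polyhedron along which `x ⬝ y` is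
unbounded.

Farkas' lemma follows from Hahn–Banach once finitely generated cones are known to be closed.
A cone generated by linearly independent vectors is the image of an orthant under a closed
embedding; otherwise a linear dependence lets every point of the cone be written without one of
the generators, and the cone is a finite union of smaller ones.
-/

open Set Matrix

section ClosedImage

variable {𝕜 V E : Type*} [NontriviallyNormedField 𝕜] [CompleteSpace 𝕜]
  [AddCommGroup V] [TopologicalSpace V] [IsTopologicalAddGroup V] [Module 𝕜 V]
  [ContinuousSMul 𝕜 V] [T2Space V] [FiniteDimensional 𝕜 V]
  [AddCommGroup E] [TopologicalSpace E] [IsTopologicalAddGroup E] [Module 𝕜 E]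
  [ContinuousSMul 𝕜 E] [T2Space E]

theorem LinearMap.isClosed_image_inter_of_disjoint_ker (f : V →ₗ[𝕜] E) {W : Submodule 𝕜 V}
    (hW : Disjoint W (LinearMap.ker f)) {S : Set V} (hS : IsClosed S) :
    IsClosed (f '' (S ∩ W)) := by
  have hinj : LinearMap.ker (f.domRestrict W) = ⊥ := by
    rwa [LinearMap.ker_domRestrict, ← Submodule.disjoint_iff_comap_eq_bot]
  have himage : f '' (S ∩ W) = f.domRestrict W '' (Subtype.val ⁻¹' S) := by
    rw [inter_comm, ← Subtype.image_preimage_coe, image_image]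
    rfl
  rw [himage]
  exact (LinearMap.isClosedEmbedding_of_injective hinj).isClosedMap _
    (hS.preimage continuous_subtype_val)

end ClosedImage

section VanishingOff

variable {ι : Type*} (R : Type*) [Semiring R]

def vanishingOff (s : Set ι) : Submodule R (ι → R) :=
  Submodule.pi sᶜ fun _ => ⊥

variable {R}

@[simp]
theorem mem_vanishingOff {s : Set ι} {l : ι → R} : l ∈ vanishingOff R s ↔ ∀ i ∉ s, l i = 0 := by
  simp [vanishingOff]

theorem vanishingOff_mono {s t : Set ι} (hst : s ⊆ t) : vanishingOff R s ≤ vanishingOff R t :=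
  fun _ hl i hi => mem_vanishingOff.mp hl i fun his => hi (hst his)

@[simp]
theorem vanishingOff_univ : vanishingOff R (univ : Set ι) = ⊤ := by
  ext; simp

end VanishingOff

section FinitelyGeneratedCone

variable {ι E : Type*} [Finite ι]

theorem exists_nonneg_add_smul_eq_zero {𝕜 : Type*} [Field 𝕜] [LinearOrder 𝕜]
    [IsStrictOrderedRing 𝕜] {l c : ι → 𝕜} (hl : 0 ≤ l) (hc : ∃ j, c j < 0) :
    ∃ j, c j < 0 ∧ ∃ t : 𝕜, 0 ≤ l + t • c ∧ (l + t • c) j = 0 := by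
  obtain ⟨j, hj, hmin⟩ := exists_min_image {i | c i < 0} (fun i => l i / -c i) (toFinite _) hc
  simp only [mem_ofPred_eq] at hj hmin
  refine ⟨j, hj, l j / -c j, fun i => ?_, ?_⟩
  · have ht : 0 ≤ l j / -c j := div_nonneg (hl j) (by linarith)
    rcases lt_or_ge (c i) 0 with hi | hi
    · have hratio := hmin i hi
      rw [le_div_iff₀ (by linarith)] at hratio
      simp only [Pi.zero_apply, Pi.add_apply, Pi.smul_apply, smul_eq_mul]
      linarith
    · simpa using add_nonneg (hl i) (mul_nonneg ht hi)
  · simp only [Pi.add_apply, Pi.smul_apply, smul_eq_mul]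
    field_simp [hj.ne]
    ring

variable [AddCommGroup E] [Module ℝ E]

theorem image_nonneg_inter_vanishingOff_subset_biUnion (f : (ι → ℝ) →ₗ[ℝ] E) (s : Set ι)
    {c : ι → ℝ} (hcs : c ∈ vanishingOff ℝ s) (hcf : f c = 0) (hneg : ∃ j, c j < 0) :
    f '' (Ici 0 ∩ vanishingOff ℝ s) ⊆ ⋃ j ∈ s, f '' (Ici 0 ∩ vanishingOff ℝ (s \ {j})) := by
  rintro _ ⟨l, ⟨hl, hls⟩, rfl⟩
  obtain ⟨j, hj, t, hnonneg, hzero⟩ := exists_nonneg_add_smul_eq_zero hl hneg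
  rw [mem_vanishingOff] at hcs
  rw [SetLike.mem_coe, mem_vanishingOff] at hls
  have hjs : j ∈ s := by
    by_contra hjs
    exact hj.ne (hcs j hjs)
  refine mem_biUnion hjs ⟨l + t • c, ⟨hnonneg, ?_⟩, by simp [hcf]⟩
  rw [SetLike.mem_coe, mem_vanishingOff]
  intro i hi
  by_cases hij : i = j
  · exact hij ▸ hzero
  · have his : i ∉ s := fun his => hi ⟨his, hij⟩
    simp [hls i his, hcs i his]

variable [TopologicalSpace E] [IsTopologicalAddGroup E] [ContinuousSMul ℝ E] [T2Space E]

theorem LinearMap.isClosed_image_nonneg (f : (ι → ℝ) →ₗ[ℝ] E) : IsClosed (f '' Ici 0) := by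
  suffices h : ∀ s : Set ι, IsClosed (f '' (Ici 0 ∩ vanishingOff ℝ s)) by
    simpa using h univ
  intro s
  induction s using WellFoundedLT.induction with
  | ind s ih =>
  by_cases hdisj : Disjoint (vanishingOff ℝ s) (LinearMap.ker f)
  · exact f.isClosed_image_inter_of_disjoint_ker hdisj isClosed_Ici
  obtain ⟨c, hcs, hcf, hneg⟩ : ∃ c ∈ vanishingOff ℝ s, f c = 0 ∧ ∃ j, c j < 0 := by
    obtain ⟨c, hcs, hcf, hc0⟩ : ∃ c ∈ vanishingOff ℝ s, f c = 0 ∧ c ≠ 0 := by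
      simpa [Submodule.disjoint_def] using hdisj
    by_cases hneg : ∃ j, c j < 0
    · exact ⟨c, hcs, hcf, hneg⟩
    · simp only [not_exists, not_lt] at hneg
      obtain ⟨j, hj⟩ := Function.ne_iff.mp hc0
      exact ⟨-c, neg_mem hcs, by simp [hcf], j, by simpa using (hneg j).lt_of_ne' hj⟩
  have hunion : f '' (Ici 0 ∩ vanishingOff ℝ s) =
      ⋃ j ∈ s, f '' (Ici 0 ∩ vanishingOff ℝ (s \ {j})) :=
    (image_nonneg_inter_vanishingOff_subset_biUnion f s hcs hcf hneg).antisymm <|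
      iUnion₂_subset fun j _ =>
        image_mono (inter_subset_inter_right _ (vanishingOff_mono sdiff_subset))
  rw [hunion]
  exact (toFinite s).isClosed_biUnion fun j hj => ih _ (sdiff_singleton_ssubset.mpr hj)

end FinitelyGeneratedCone

section Farkas

variable {m ι κ : Type*} [Fintype m] [Fintype ι]

theorem Matrix.exists_nonneg_mulVec_eq_of_forall_vecMul_nonneg (M : Matrix m ι ℝ) {v : m → ℝ}
    (h : ∀ y, 0 ≤ y ᵥ* M → 0 ≤ y ⬝ᵥ v) : ∃ l, 0 ≤ l ∧ M *ᵥ l = v := by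
  classical
  by_contra hv
  let K : ProperCone ℝ (m → ℝ) :=
    ⟨(PointedCone.positive ℝ (ι → ℝ)).map M.mulVecLin, by
      simpa using M.mulVecLin.isClosed_image_nonneg⟩
  obtain ⟨φ, hφK, hφv⟩ := K.hyperplane_separation_point (x₀ := v) (by simpa [K] using hv)
  obtain ⟨y, hy⟩ := (dotProductEquiv ℝ m).surjective (φ : Module.Dual ℝ (m → ℝ))
  have hφ : ∀ w, φ w = y ⬝ᵥ w := fun w => by simpa using (LinearMap.congr_fun hy w).symm
  refine (h y fun i => ?_).not_gt (hφ v ▸ hφv)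
  have hcol := hφK (M *ᵥ Pi.single i 1) ⟨Pi.single i 1, by simp [Pi.single_nonneg], rfl⟩
  rwa [hφ, dotProduct_mulVec, dotProduct_single_one] at hcol

theorem Matrix.exists_nonneg_mulVec_add_mulVec_eq_of_forall [Fintype κ] (M : Matrix m ι ℝ)
    (M' : Matrix m κ ℝ) {v : m → ℝ} (h : ∀ y, 0 ≤ y ᵥ* M → y ᵥ* M' = 0 → 0 ≤ y ⬝ᵥ v) :
    ∃ l u, 0 ≤ l ∧ M *ᵥ l + M' *ᵥ u = v := by
  obtain ⟨l, hl, hv⟩ :=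
    (fromCols M (fromCols M' (-M'))).exists_nonneg_mulVec_eq_of_forall_vecMul_nonneg fun y hy => by
      rw [vecMul_fromCols, vecMul_fromCols, vecMul_neg, ← Sum.elim_zero_zero, Sum.elim_le_elim_iff,
        ← Sum.elim_zero_zero, Sum.elim_le_elim_iff, neg_nonneg] at hy
      exact h y hy.1 (le_antisymm hy.2.2 hy.2.1)
  refine ⟨l ∘ Sum.inl, l ∘ Sum.inr ∘ Sum.inl - l ∘ Sum.inr ∘ Sum.inr, fun i => hl _, ?_⟩
  rw [← hv, fromCols_mulVec, fromCols_mulVec, mulVec_sub, neg_mulVec]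
  simp only [Function.comp_def]
  abel

end Farkas

@[simp]
theorem Matrix.vecMul_replicateRow_unit {R m : Type*} [Semiring R] (a : R) (g : m → R) :
    (fun _ : Unit => a) ᵥ* replicateRow Unit g = a • g := by
  ext; simp [vecMul, dotProduct]

@[simp]
theorem Matrix.replicateRow_unit_mulVec {R m : Type*} [Semiring R] [Fintype m] (g v : m → R) :
    replicateRow Unit g *ᵥ v = fun _ => g ⬝ᵥ v :=
  rfl

def polyhedron {m k N : Type*} [Fintype N] (G : Matrix m N ℝ) (g : m → ℝ) (H : Matrix k N ℝ)
    (h : k → ℝ) : Set (N → ℝ) :=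
  {w | G *ᵥ w ≤ g ∧ H *ᵥ w = h}

section AffineFarkas

variable {m k N : Type*} [Fintype N] {G : Matrix m N ℝ} {g : m → ℝ} {H : Matrix k N ℝ}
  {h : k → ℝ} {c : N → ℝ} {γ : ℝ}

theorem dotProduct_nonpos_of_recession {w₀ Y : N → ℝ} (hw₀ : w₀ ∈ polyhedron G g H h)
    (hvalid : ∀ w ∈ polyhedron G g H h, c ⬝ᵥ w ≤ γ) (hGY : G *ᵥ Y ≤ 0) (hHY : H *ᵥ Y = 0) :
    c ⬝ᵥ Y ≤ 0 := by
  by_contra! hpos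
  set t := (γ - c ⬝ᵥ w₀ + 1) / c ⬝ᵥ Y
  have ht : 0 ≤ t := div_nonneg (by linarith [hvalid w₀ hw₀]) hpos.le
  have hmem : w₀ + t • Y ∈ polyhedron G g H h := by
    refine ⟨?_, ?_⟩
    · rw [mulVec_add, mulVec_smul]
      exact add_le_of_le_of_nonpos hw₀.1 (smul_nonpos_of_nonneg_of_nonpos ht hGY)
    · rw [mulVec_add, mulVec_smul, hHY, smul_zero, add_zero, hw₀.2]
  have hval : c ⬝ᵥ (w₀ + t • Y) = γ + 1 := by
    rw [dotProduct_add, dotProduct_smul, smul_eq_mul, div_mul_cancel₀ _ hpos.ne']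
    ring
  linarith [hvalid _ hmem]

theorem dotProduct_add_mul_nonneg_of_homogenization (hne : (polyhedron G g H h).Nonempty)
    (hvalid : ∀ w ∈ polyhedron G g H h, c ⬝ᵥ w ≤ γ) {Y : N → ℝ} {s : ℝ} (hs : 0 ≤ s)
    (hG : 0 ≤ G *ᵥ Y + s • g) (hH : H *ᵥ Y + s • h = 0) : 0 ≤ c ⬝ᵥ Y + s * γ := by
  rcases hs.eq_or_lt with rfl | hs
  · obtain ⟨w₀, hw₀⟩ := hne
    simp only [zero_smul, add_zero] at hG hH
    simpa using dotProduct_nonpos_of_recession hw₀ hvalid (Y := -Y)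
      (by rwa [mulVec_neg, neg_nonpos]) (by rw [mulVec_neg, hH, neg_zero])
  obtain ⟨w, rfl⟩ : ∃ w, Y = -(s • w) :=
    ⟨-s⁻¹ • Y, by rw [smul_smul, mul_neg, mul_inv_cancel₀ hs.ne', neg_smul, one_smul, neg_neg]⟩
  rw [mulVec_neg, mulVec_smul, neg_add_eq_sub, ← smul_sub] at hG hH
  have hmem : w ∈ polyhedron G g H h :=
    ⟨sub_nonneg.mp ((smul_nonneg_iff_nonneg_of_pos_left hs).mp hG),
      (sub_eq_zero.mp ((smul_eq_zero.mp hH).resolve_left hs.ne')).symm⟩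
  rw [dotProduct_neg, dotProduct_smul, smul_eq_mul]
  nlinarith [hvalid w hmem]

theorem forall_mem_polyhedron_dotProduct_le_iff [Fintype m] [Fintype k]
    (hne : (polyhedron G g H h).Nonempty) :
    (∀ w ∈ polyhedron G g H h, c ⬝ᵥ w ≤ γ) ↔
      ∃ lam mu, 0 ≤ lam ∧ Gᵀ *ᵥ lam + Hᵀ *ᵥ mu = c ∧ g ⬝ᵥ lam + h ⬝ᵥ mu ≤ γ := by
  constructor
  · intro hvalid
    -- Homogenization: the columns `(Gᵢ, gᵢ)` and the slack column `(0, 1)` get nonnegative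
    -- weights, the columns `(Hⱼ, hⱼ)` free ones.
    obtain ⟨l, mu, hl, hv⟩ := exists_nonneg_mulVec_add_mulVec_eq_of_forall
      (fromBlocks Gᵀ 0 (replicateRow Unit g) (1 : Matrix Unit Unit ℝ))
      (fromRows Hᵀ (replicateRow Unit h)) (v := c ⊕ᵥ fun _ => γ) fun y hy hy' => by
        obtain ⟨Y, s, rfl⟩ : ∃ Y s, y = Y ⊕ᵥ fun _ => s :=
          ⟨y ∘ Sum.inl, y (Sum.inr ()), by ext (i | i) <;> rfl⟩
        simp only [vecMul_fromBlocks, vecMul_fromRows, Sum.elim_comp_inl, Sum.elim_comp_inr,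
          vecMul_transpose, vecMul_replicateRow_unit, vecMul_zero, vecMul_one, zero_add] at hy hy'
        rw [← Sum.elim_zero_zero, Sum.elim_le_elim_iff] at hy
        rw [sumElim_dotProduct_sumElim, dotProduct_comm]
        simpa [dotProduct] using
          dotProduct_add_mul_nonneg_of_homogenization hne hvalid (hy.2 ()) hy.1 hy'
    simp only [fromBlocks_mulVec, fromRows_mulVec, replicateRow_unit_mulVec, zero_mulVec,
      one_mulVec, add_zero, ← Sum.elim_add_add, Sum.elim_eq_iff] at hv
    refine ⟨l ∘ Sum.inl, mu, fun i => hl _, hv.1, ?_⟩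
    have hγ := congrFun hv.2 ()
    have hslack : 0 ≤ l (Sum.inr ()) := hl _
    simp only [Pi.add_apply, Function.comp_apply] at hγ
    linarith
  · rintro ⟨lam, mu, hlam, hc, hγ⟩ w ⟨hGw, hHw⟩
    calc c ⬝ᵥ w = lam ⬝ᵥ G *ᵥ w + mu ⬝ᵥ H *ᵥ w := by
          rw [← hc, add_dotProduct, mulVec_transpose, mulVec_transpose, dotProduct_mulVec,
            dotProduct_mulVec]
      _ ≤ lam ⬝ᵥ g + mu ⬝ᵥ h := by
          rw [hHw]
          gcongr
          exact dotProduct_le_dotProduct_of_nonneg_left hGw hlam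
      _ ≤ γ := by rwa [dotProduct_comm lam, dotProduct_comm mu]

end AffineFarkas

/-- The scaled polar of (the projection onto the `y`-variables of) a non-empty polyhedron
`Q = {y : ∃ z, Ay + Bz ≤ b, Cy + Dz = d}` is given by the explicit extended formulation of
Martin / Weltge. -/
theorem polar_of_polyhedron
    {n p q r : ℕ}
    (A : Matrix (Fin p) (Fin n) ℝ) (B : Matrix (Fin p) (Fin q) ℝ) (b : Fin p → ℝ)
    (C : Matrix (Fin r) (Fin n) ℝ) (D : Matrix (Fin r) (Fin q) ℝ) (d : Fin r → ℝ)
    (hne : {y : Fin n → ℝ |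
      ∃ z, A.mulVec y + B.mulVec z ≤ b ∧ C.mulVec y + D.mulVec z = d}.Nonempty)
    (γ : ℝ) :
    {x : Fin n → ℝ | ∀ y,
        (∃ z, A.mulVec y + B.mulVec z ≤ b ∧ C.mulVec y + D.mulVec z = d) → x ⬝ᵥ y ≤ γ} =
    {x : Fin n → ℝ | ∃ lam : Fin p → ℝ, ∃ mu : Fin r → ℝ, 0 ≤ lam ∧
        Aᵀ.mulVec lam + Cᵀ.mulVec mu = x ∧
        Bᵀ.mulVec lam + Dᵀ.mulVec mu = 0 ∧
        b ⬝ᵥ lam + d ⬝ᵥ mu ≤ γ} := by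
  set P := polyhedron (fromCols A B) b (fromCols C D) d
  have hP : ∀ y z, y ⊕ᵥ z ∈ P ↔ A *ᵥ y + B *ᵥ z ≤ b ∧ C *ᵥ y + D *ᵥ z = d := by
    simp [P, polyhedron, fromCols_mulVec]
  obtain ⟨y₀, z₀, h₀⟩ := hne
  ext x
  calc (∀ y, (∃ z, A *ᵥ y + B *ᵥ z ≤ b ∧ C *ᵥ y + D *ᵥ z = d) → x ⬝ᵥ y ≤ γ)
      ↔ ∀ w ∈ P, (x ⊕ᵥ 0) ⬝ᵥ w ≤ γ := by
        refine ⟨fun h w hw => ?_, fun h y ⟨z, hyz⟩ => ?_⟩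
        · rw [← Sum.elim_comp_inl_inr w] at hw ⊢
          rw [sumElim_dotProduct_sumElim, zero_dotProduct, add_zero]
          exact h _ ⟨_, (hP _ _).mp hw⟩
        · simpa [sumElim_dotProduct_sumElim] using h _ ((hP y z).mpr hyz)
    _ ↔ ∃ lam mu, 0 ≤ lam ∧ (fromCols A B)ᵀ *ᵥ lam + (fromCols C D)ᵀ *ᵥ mu = x ⊕ᵥ 0 ∧
          b ⬝ᵥ lam + d ⬝ᵥ mu ≤ γ :=
        forall_mem_polyhedron_dotProduct_le_iff ⟨_, (hP y₀ z₀).mpr h₀⟩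
    _ ↔ _ := by
        simp only [transpose_fromCols, fromRows_mulVec, ← Sum.elim_add_add, Sum.elim_eq_iff,
          and_assoc]
        rfl
end

section
/- Let G be a graph with vertices v₁,…,v_n and let 1 ≤ k ≤ n. For i = 1,…,k let V_i = N⁺(v_i) \ {v₁,…,v_{i−1}} and let V₀ = {v_{k+1},…,v_n}. Suppose for each i = 0,…,k that P_i ⊆ ℝ^{V_i} satisfies STAB(G[V_i]) ⊆ P_i ⊆ QSTAB(G[V_i]). Define P = {x ∈ ℝ^V : x|_{V_i} ∈ P_i for all i = 0,…,k}. Then STAB(G) ⊆ P ⊆ QSTAB(G). -/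
/-- Characteristic (incidence) vector of a finite vertex set. -/
noncomputable def charVec {V : Type*} [DecidableEq V] (S : Finset V) : V → ℝ :=
  fun v => if v ∈ S then 1 else 0

/-- The stable set polytope: convex hull of characteristic vectors of stable sets
(stable sets of `G` are exactly the cliques of the complement `Gᶜ`). -/
noncomputable def STAB {V : Type*} [DecidableEq V] (G : SimpleGraph V) : Set (V → ℝ) :=
  convexHull ℝ {x | ∃ S : Finset V, Gᶜ.IsClique ↑S ∧ x = charVec S}

/-- The clique relaxation of the stable set polytope. -/
def QSTAB {V : Type*} [DecidableEq V] (G : SimpleGraph V) : Set (V → ℝ) :=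
  {x | (∀ v, 0 ≤ x v) ∧ ∀ C : Finset V, G.IsClique ↑C → ∑ v ∈ C, x v ≤ 1}


/-!
Restricting to `U` is linear and sends stable sets of `G` to stable sets of `G[U]`, so
`STAB G` restricts into every `STAB G[Vᵢ] ⊆ Pᵢ`. Conversely, every clique of `G` lies in some `Vᵢ`:
if its smallest vertex is `vᵢ` with `i ≤ k`, the clique lies in `N⁺(vᵢ) \ {v₁,…,v_{i-1}} = Vᵢ`,
and otherwise in `V₀`. So every nonnegativity and clique constraint of `QSTAB G` is one of some
`QSTAB G[Vᵢ] ⊇ Pᵢ`.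
-/

namespace SimpleGraph

variable {V : Type*} [DecidableEq V] (G : SimpleGraph V)

theorem restrict_mem_stab_induce (U : Set V) {x : V → ℝ} (hx : x ∈ STAB G) :
    (fun v : U => x v) ∈ STAB (G.induce U) := by
  classical
  let restrict : (V → ℝ) →ₗ[ℝ] (U → ℝ) := LinearMap.funLeft ℝ ℝ Subtype.val
  suffices STAB G ⊆ restrict ⁻¹' STAB (G.induce U) from this hx
  refine convexHull_min ?_ ((convex_convexHull ℝ _).linear_preimage restrict)
  rintro _ ⟨S, hS, rfl⟩
  refine subset_convexHull ℝ _ ⟨S.subtype (· ∈ U), ?_, ?_⟩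
  · intro a ha b hb hab
    simp only [Finset.mem_coe, Finset.mem_subtype] at ha hb
    have := hS ha hb (Subtype.coe_injective.ne hab)
    simp_all
  · ext v
    simp [restrict, charVec, LinearMap.funLeft]

theorem sum_le_one_of_restrict_mem_qstab_induce {U : Set V} {x : V → ℝ}
    (hx : (fun v : U => x v) ∈ QSTAB (G.induce U)) {C : Finset V} (hC : G.IsClique ↑C)
    (hCU : ↑C ⊆ U) : ∑ v ∈ C, x v ≤ 1 := by
  classical
  have hC' : (G.induce U).IsClique ↑(C.subtype (· ∈ U)) := by
    rw [isClique_induce_iff]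
    exact hC.subset (by rintro _ ⟨w, hw, rfl⟩; exact Finset.mem_subtype.1 hw)
  calc ∑ v ∈ C, x v = ∑ v ∈ C.subtype (· ∈ U), x v :=
        (Finset.sum_subtype_of_mem x fun v hv => hCU hv).symm
    _ ≤ 1 := hx.2 _ hC'

theorem mem_qstab_of_forall_restrict_mem {ι : Type*} {U : ι → Set V} {I : Set ι}
    (hcover : ∀ C : Finset V, G.IsClique ↑C → ∃ i ∈ I, ↑C ⊆ U i) {x : V → ℝ}
    (hx : ∀ i ∈ I, (fun v : U i => x v) ∈ QSTAB (G.induce (U i))) : x ∈ QSTAB G := by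
  refine ⟨fun v => ?_, fun C hC => ?_⟩
  · obtain ⟨i, hi, hvU⟩ := hcover {v} (by simp)
    exact (hx i hi).1 ⟨v, hvU (by simp)⟩
  · obtain ⟨i, hi, hCU⟩ := hcover C hC
    exact G.sum_le_one_of_restrict_mem_qstab_induce (hx i hi) hC hCU

theorem stab_subset_and_subset_qstab_of_isClique_cover {ι : Type*} (U : ι → Set V) (I : Set ι)
    (hcover : ∀ C : Finset V, G.IsClique ↑C → ∃ i ∈ I, ↑C ⊆ U i)
    (P : ∀ i, Set (U i → ℝ))
    (hP : ∀ i ∈ I, STAB (G.induce (U i)) ⊆ P i ∧ P i ⊆ QSTAB (G.induce (U i))) :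
    STAB G ⊆ {x | ∀ i ∈ I, (fun v : U i => x v) ∈ P i} ∧
      {x | ∀ i ∈ I, (fun v : U i => x v) ∈ P i} ⊆ QSTAB G :=
  ⟨fun _ hx i hi => (hP i hi).1 (G.restrict_mem_stab_induce (U i) hx),
    fun _ hx => G.mem_qstab_of_forall_restrict_mem hcover fun i hi => (hP i hi).2 (hx i hi)⟩

theorem subset_insert_neighborFinset_of_isClique {C : Finset V} (hC : G.IsClique ↑C) {v : V}
    (hv : v ∈ C) [Fintype (G.neighborSet v)] : C ⊆ insert v (G.neighborFinset v) := by
  intro w hw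
  rcases eq_or_ne v w with rfl | hvw
  · exact Finset.mem_insert_self _ _
  · exact Finset.mem_insert_of_mem ((G.mem_neighborFinset v w).2 (hC hv hw hvw))

end SimpleGraph

theorem exists_le_subset_of_isClique {n k : ℕ} (G : SimpleGraph (Fin n)) [DecidableRel G.Adj]
    (Vi : ℕ → Finset (Fin n))
    (hV0 : Vi 0 = Finset.univ.filter (fun v : Fin n => k ≤ (v : ℕ)))
    (hVi : ∀ v : Fin n, (v : ℕ) < k →
      Vi (v + 1) = insert v (G.neighborFinset v) \ Finset.univ.filter (fun w : Fin n => w < v))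
    {C : Finset (Fin n)} (hC : G.IsClique ↑C) : ∃ i ≤ k, C ⊆ Vi i := by
  rcases C.eq_empty_or_nonempty with rfl | hne
  · exact ⟨0, k.zero_le, Finset.empty_subset _⟩
  obtain ⟨v, hvC, hvmin⟩ := C.exists_min_image id hne
  rcases le_or_gt k v with hkv | hvk
  · refine ⟨0, k.zero_le, fun w hw => ?_⟩
    rw [hV0]
    simpa using hkv.trans (hvmin w hw)
  · refine ⟨v + 1, hvk, fun w hw => ?_⟩
    rw [hVi v hvk, Finset.mem_sdiff]
    constructor
    · exact G.subset_insert_neighborFinset_of_isClique hC hvC hw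
    · simpa using hvmin w hw

/-- Decomposition lemma: with `Vᵢ = N⁺(vᵢ) \ {v₁,…,v_{i-1}}` for `i = 1,…,k` and
`V₀ = {v_{k+1},…,v_n}` (vertices are `0,…,n-1`, so `vᵢ` is the vertex `i-1`),
if each `Pᵢ` is squeezed between `STAB` and `QSTAB` of the induced subgraph `G[Vᵢ]`,
then `P = {x : x|_{Vᵢ} ∈ Pᵢ ∀ i}` is squeezed between `STAB(G)` and `QSTAB(G)`. -/
theorem stab_qstab_decomposition {n k : ℕ} (hkn : k ≤ n)
    (G : SimpleGraph (Fin n)) [DecidableRel G.Adj]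
    (Vi : ℕ → Finset (Fin n))
    (hV0 : Vi 0 = Finset.univ.filter (fun v : Fin n => k ≤ (v : ℕ)))
    (hVi : ∀ i, (h1 : 1 ≤ i) → (h2 : i ≤ k) → Vi i =
      insert (⟨i - 1, by omega⟩ : Fin n)
          (G.neighborFinset (⟨i - 1, by omega⟩ : Fin n)) \
        Finset.univ.filter (fun v : Fin n => (v : ℕ) < i - 1))
    (P : ∀ i : ℕ, Set ((↑(Vi i) : Set (Fin n)) → ℝ))
    (hP : ∀ i ≤ k, STAB (SimpleGraph.induce (↑(Vi i) : Set (Fin n)) G) ⊆ P i ∧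
                   P i ⊆ QSTAB (SimpleGraph.induce (↑(Vi i) : Set (Fin n)) G)) :
    STAB G ⊆ {x : Fin n → ℝ |
        ∀ i ≤ k, (fun v : (↑(Vi i) : Set (Fin n)) => x v.1) ∈ P i} ∧
    {x : Fin n → ℝ |
        ∀ i ≤ k, (fun v : (↑(Vi i) : Set (Fin n)) => x v.1) ∈ P i} ⊆ QSTAB G := by
  have hVi' : ∀ v : Fin n, (v : ℕ) < k →
      Vi (v + 1) = insert v (G.neighborFinset v) \ Finset.univ.filter (fun w : Fin n => w < v) :=
    fun v hv => by simpa using hVi (v + 1) (by omega) hv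
  exact G.stab_subset_and_subset_qstab_of_isClique_cover (fun i => ↑(Vi i)) (Set.Iic k)
    (fun _ hC => exists_le_subset_of_isClique G Vi hV0 hVi' hC) P hP
end

section
/- Let M be a non-negative matrix that is the slack matrix of a pair of polytopes (P, Q) with P = conv(v₁,…,v_n) ⊆ Q = {x : Ax ≤ b} ⊆ ℝ^d, where A has rows a₁,…,a_m, i.e. M_{ij} = b_i − a_iᵀv_j ≥ 0. Suppose M = TU for non-negative matrices T (m × N) and U (N × n). Then P ⊆ {x ∈ ℝ^d : ∃ y ∈ ℝ^N, y ≥ 0, Ax + Ty = b} ⊆ Q. -/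
/-!
Column `j` of `U` certifies that the vertex `v j` lies in the projected polyhedron, since
`b - A v_j = M e_j = T (U e_j)`; the projected polyhedron is convex, so it contains `conv(v)`.
Conversely `T y ≥ 0` for `y ≥ 0`, so `A x + T y = b` forces `A x ≤ b`.
-/

open Matrix

section ProjectedPolyhedron

variable {ι κ μ : Type*} [Fintype ι] [Fintype κ]

theorem convex_setOf_exists_nonneg_mulVec_add_mulVec_eq
    (A : Matrix μ ι ℝ) (T : Matrix μ κ ℝ) (b : μ → ℝ) :
    Convex ℝ {x | ∃ y : κ → ℝ, (∀ k, 0 ≤ y k) ∧ A *ᵥ x + T *ᵥ y = b} := by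
  rintro x₁ ⟨y₁, hy₁, h₁⟩ x₂ ⟨y₂, hy₂, h₂⟩ s t hs ht hst
  refine ⟨s • y₁ + t • y₂, fun k => ?_, ?_⟩
  · simpa using add_nonneg (mul_nonneg hs (hy₁ k)) (mul_nonneg ht (hy₂ k))
  · calc A *ᵥ (s • x₁ + t • x₂) + T *ᵥ (s • y₁ + t • y₂)
        = s • (A *ᵥ x₁ + T *ᵥ y₁) + t • (A *ᵥ x₂ + T *ᵥ y₂) := by
          simp only [mulVec_add, mulVec_smul]
          module
      _ = b := by rw [h₁, h₂, Convex.combo_self hst]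

theorem mulVec_le_of_mulVec_add_mulVec_eq {A : Matrix μ ι ℝ} {T : Matrix μ κ ℝ}
    {b : μ → ℝ} {x : ι → ℝ} {y : κ → ℝ} (hT : ∀ i k, 0 ≤ T i k) (hy : ∀ k, 0 ≤ y k)
    (h : A *ᵥ x + T *ᵥ y = b) : A *ᵥ x ≤ b := fun i => by
  have hTy : 0 ≤ (T *ᵥ y) i := dotProduct_nonneg_of_nonneg (fun k => hT i k) hy
  have hi := congrFun h i
  simp only [Pi.add_apply] at hi
  linarith

end ProjectedPolyhedron

theorem mulVec_add_mulVec_col_eq_of_mul_apply_eq_sub {ι κ μ ν : Type*} [Fintype ι] [Fintype κ]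
    {A : Matrix μ ι ℝ} {b : μ → ℝ} {v : ν → ι → ℝ} {T : Matrix μ κ ℝ} {U : Matrix κ ν ℝ}
    (hslack : ∀ i j, (T * U) i j = b i - (A *ᵥ v j) i) (j : ν) :
    A *ᵥ v j + T *ᵥ (fun k => U k j) = b := funext fun i => by
  have hij := hslack i j
  rw [mul_apply] at hij
  simp only [Pi.add_apply, mulVec, dotProduct] at hij ⊢
  linarith

theorem yannakakis_factorization_gives_ef_general
    {d n m N : ℕ} (v : Fin n → Fin d → ℝ)
    (A : Matrix (Fin m) (Fin d) ℝ) (b : Fin m → ℝ)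
    (M : Matrix (Fin m) (Fin n) ℝ)
    (hM : ∀ i j, M i j = b i - A.mulVec (v j) i)
    (T : Matrix (Fin m) (Fin N) ℝ) (U : Matrix (Fin N) (Fin n) ℝ)
    (hT : ∀ i j, 0 ≤ T i j) (hU : ∀ i j, 0 ≤ U i j)
    (hTU : M = T * U) :
    convexHull ℝ (Set.range v) ⊆
      {x | ∃ y : Fin N → ℝ, (∀ i, 0 ≤ y i) ∧ A.mulVec x + T.mulVec y = b} ∧
    {x | ∃ y : Fin N → ℝ, (∀ i, 0 ≤ y i) ∧ A.mulVec x + T.mulVec y = b} ⊆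
      {x | A.mulVec x ≤ b} := by
  subst hTU
  refine ⟨convexHull_min ?_ (convex_setOf_exists_nonneg_mulVec_add_mulVec_eq A T b), ?_⟩
  · rintro _ ⟨j, rfl⟩
    exact ⟨fun k => U k j, fun k => hU k j, mulVec_add_mulVec_col_eq_of_mul_apply_eq_sub hM j⟩
  · rintro x ⟨y, hy, h⟩
    exact mulVec_le_of_mulVec_add_mulVec_eq hT hy h

/-- **Yannakakis' theorem for pairs of polytopes** (one direction): if the slack matrix
`M` of the pair `(P, Q)`, `P = conv(v₁,…,v_n) ⊆ Q = {x : Ax ≤ b}`, admits a non-negative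
factorization `M = T · U`, then `P ⊆ {x : ∃ y ≥ 0, Ax + Ty = b} ⊆ Q`. -/
theorem yannakakis_factorization_gives_ef
    {d n m N : ℕ} (v : Fin n → Fin d → ℝ)
    (A : Matrix (Fin m) (Fin d) ℝ) (b : Fin m → ℝ)
    (M : Matrix (Fin m) (Fin n) ℝ)
    (hM : ∀ i j, M i j = b i - A.mulVec (v j) i)
    (hMnn : ∀ i j, 0 ≤ M i j)
    (T : Matrix (Fin m) (Fin N) ℝ) (U : Matrix (Fin N) (Fin n) ℝ)
    (hT : ∀ i j, 0 ≤ T i j) (hU : ∀ i j, 0 ≤ U i j)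
    (hTU : M = T * U) :
    convexHull ℝ (Set.range v) ⊆
      {x | ∃ y : Fin N → ℝ, (∀ i, 0 ≤ y i) ∧ A.mulVec x + T.mulVec y = b} ∧
    {x | ∃ y : Fin N → ℝ, (∀ i, 0 ≤ y i) ∧ A.mulVec x + T.mulVec y = b} ⊆
      {x | A.mulVec x ≤ b} :=
  yannakakis_factorization_gives_ef_general v A b M hM T U hT hU hTU
end

section
/- Let T = 2ℓ + L with positive integers ℓ, L. In any 0/1 vector x of length T in which every maximal block of consecutive ones has length ≥ ℓ and every maximal block of consecutive zeros has length ≥ L, and for any index i with x_i = 0, the window {i, i+1, …, min(i+L, T)} contains at most one switch-on index and at most one switch-off index of x. -/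
/-!
Two switches of the same kind at positions `a < b` enclose a switch of the other kind, so by the
min-up and min-down conditions they are at least `ℓ + L > L` apart. A window of width `L` therefore
holds at most one switch of each kind.
-/

/-- `x` switches away from the value `v` at `j`: switch-on for `v = false`, switch-off for
`v = true`. -/
def IsSwitch (x : ℕ → Bool) (v : Bool) (j : ℕ) : Prop :=
  x j = v ∧ x (j + 1) = !v

def MinUpMinDown (l L T : ℕ) (x : ℕ → Bool) : Prop :=
  ∀ i j : ℕ, 1 ≤ i → i < j → j + 1 ≤ T →
    (IsSwitch x false i → IsSwitch x true j → l ≤ j - i) ∧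
    (IsSwitch x true i → IsSwitch x false j → L ≤ j - i)

lemma Nat.exists_le_lt_and_not_succ_of_not {p : ℕ → Prop} {a b : ℕ} (hab : a ≤ b)
    (ha : p a) (hb : ¬ p b) : ∃ k, a ≤ k ∧ k < b ∧ p k ∧ ¬ p (k + 1) := by
  induction b, hab using Nat.le_induction with
  | base => exact absurd ha hb
  | succ b hab ih =>
    by_cases hpb : p b
    · exact ⟨b, hab, b.lt_succ_self, hpb, hb⟩
    · obtain ⟨k, hak, hkb, hk⟩ := ih hpb
      exact ⟨k, hak, hkb.trans b.lt_succ_self, hk⟩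

lemma exists_isSwitch_of_eq_of_eq_not {x : ℕ → Bool} {v : Bool} {a b : ℕ} (hab : a ≤ b)
    (ha : x a = v) (hb : x b = !v) : ∃ k, a ≤ k ∧ k < b ∧ IsSwitch x v k := by
  obtain ⟨k, hak, hkb, hk, hk1⟩ :=
    Nat.exists_le_lt_and_not_succ_of_not (p := fun j ↦ x j = v) hab ha (by simp [hb])
  exact ⟨k, hak, hkb, hk, by cases v <;> simpa using hk1⟩

lemma IsSwitch.exists_isSwitch_not_between {x : ℕ → Bool} {v : Bool} {a b : ℕ}
    (ha : IsSwitch x v a) (hb : IsSwitch x v b) (hab : a < b) :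
    ∃ k, a < k ∧ k < b ∧ IsSwitch x (!v) k :=
  exists_isSwitch_of_eq_of_eq_not hab ha.2 (by simp [hb.1])

namespace MinUpMinDown

variable {l L T : ℕ} {x : ℕ → Bool}

lemma add_le_sub_of_isSwitch (h : MinUpMinDown l L T x) {v : Bool} {a b : ℕ} (ha1 : 1 ≤ a)
    (hab : a < b) (hbT : b + 1 ≤ T) (ha : IsSwitch x v a) (hb : IsSwitch x v b) :
    l + L ≤ b - a := by
  obtain ⟨k, hak, hkb, hk⟩ := ha.exists_isSwitch_not_between hb hab
  have hak' := h a k ha1 hak (by omega)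
  have hkb' := h k b (by omega) hkb hbT
  cases v
  · have := hak'.1 ha hk
    have := hkb'.2 hk hb
    omega
  · have := hak'.2 ha hk
    have := hkb'.1 hk hb
    omega

lemma eq_of_isSwitch (h : MinUpMinDown l L T x) (hl : 0 < l) {v : Bool} {a b : ℕ}
    (ha1 : 1 ≤ a) (hb1 : 1 ≤ b) (haT : a + 1 ≤ T) (hbT : b + 1 ≤ T)
    (hab : a ≤ b + L) (hba : b ≤ a + L) (ha : IsSwitch x v a) (hb : IsSwitch x v b) :
    a = b := by
  rcases lt_trichotomy a b with hlt | heq | hgt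
  · have := h.add_le_sub_of_isSwitch ha1 hlt hbT ha hb
    omega
  · exact heq
  · have := h.add_le_sub_of_isSwitch hb1 hgt haT hb ha
    omega

end MinUpMinDown

theorem minUpMinDown_window_few_switches_general
    (l L T : ℕ) (hl : 0 < l)
    (x : ℕ → Bool)
    (hmin : ∀ i j : ℕ, 1 ≤ i → i < j → j + 1 ≤ T →
      ((x i = false ∧ x (i + 1) = true) → (x j = true ∧ x (j + 1) = false) → l ≤ j - i) ∧
      ((x i = true ∧ x (i + 1) = false) → (x j = false ∧ x (j + 1) = true) → L ≤ j - i))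
    (i : ℕ) (hi1 : 1 ≤ i) :
    (∀ j₁ j₂ : ℕ, i ≤ j₁ → j₁ ≤ min (i + L) T → i ≤ j₂ → j₂ ≤ min (i + L) T →
      j₁ + 1 ≤ T → j₂ + 1 ≤ T →
      x j₁ = false → x (j₁ + 1) = true → x j₂ = false → x (j₂ + 1) = true → j₁ = j₂) ∧
    (∀ j₁ j₂ : ℕ, i ≤ j₁ → j₁ ≤ min (i + L) T → i ≤ j₂ → j₂ ≤ min (i + L) T →
      j₁ + 1 ≤ T → j₂ + 1 ≤ T →
      x j₁ = true → x (j₁ + 1) = false → x j₂ = true → x (j₂ + 1) = false → j₁ = j₂) := by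
  have h : MinUpMinDown l L T x := hmin
  constructor <;>
  · intro j₁ j₂ hij₁ hj₁ hij₂ hj₂ hj₁T hj₂T x₁ x₁' x₂ x₂'
    exact h.eq_of_isSwitch hl (by omega) (by omega) hj₁T hj₂T (by omega) (by omega)
      ⟨x₁, x₁'⟩ ⟨x₂, x₂'⟩

/-- For a 0/1 vector `x` of length `T = 2ℓ + L` (indexed `1,…,T`) satisfying the
min-up/min-down condition — for switch indices `i < j`: `j - i ≥ ℓ` if `i` is switch-on and
`j` switch-off, and `j - i ≥ L` if `i` is switch-off and `j` switch-on — and any index `i`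
with `x i = 0`, the window `{i, …, min (i+L) T}` contains at most one switch-on index and
at most one switch-off index.  (`x j = true` encodes `x_j = 1`; an index `j` with
`1 ≤ j ≤ T - 1` is switch-on if `x j = 0, x (j+1) = 1`, switch-off if `x j = 1, x (j+1) = 0`.) -/
theorem minUpMinDown_window_few_switches
    (l L T : ℕ) (hl : 0 < l) (hL : 0 < L) (hT : T = 2 * l + L)
    (x : ℕ → Bool)
    (hmin : ∀ i j : ℕ, 1 ≤ i → i < j → j + 1 ≤ T →
      ((x i = false ∧ x (i + 1) = true) → (x j = true ∧ x (j + 1) = false) → l ≤ j - i) ∧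
      ((x i = true ∧ x (i + 1) = false) → (x j = false ∧ x (j + 1) = true) → L ≤ j - i))
    (i : ℕ) (hi1 : 1 ≤ i) (hiT : i ≤ T) (hxi : x i = false) :
    (∀ j₁ j₂ : ℕ, i ≤ j₁ → j₁ ≤ min (i + L) T → i ≤ j₂ → j₂ ≤ min (i + L) T →
      j₁ + 1 ≤ T → j₂ + 1 ≤ T →
      x j₁ = false → x (j₁ + 1) = true → x j₂ = false → x (j₂ + 1) = true → j₁ = j₂) ∧
    (∀ j₁ j₂ : ℕ, i ≤ j₁ → j₁ ≤ min (i + L) T → i ≤ j₂ → j₂ ≤ min (i + L) T →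
      j₁ + 1 ≤ T → j₂ + 1 ≤ T →
      x j₁ = true → x (j₁ + 1) = false → x j₂ = true → x (j₂ + 1) = false → j₁ = j₂) :=
  minUpMinDown_window_few_switches_general l L T hl x hmin i hi1
end

section
/- Let G be a comparability graph with partial order ≤_D, and let (x, y) be a non-negative point satisfying x(v) + y(v,0) + y(v,1) = 1 for every vertex v, and x(u) + x(v) + y(u,1) + y(u,v) + y(v,0) = 1 for every pair u ≤_D v with u ≠ v comparable. Then for any chain C = {v₁ ≤_D ⋯ ≤_D v_k} of G, we have x(C) = Σ_{i=1}^k x(v_i) ≤ 1. -/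
/-!
Subtracting the vertex equation of `v` from the pair equation of `u < v` gives
`x u + y1 u + yp u v = y1 v`, so `x u + y1 u ≤ y1 v`: along a chain, `y1` grows at least by the
`x`-weight of each vertex passed. Hence the `x`-weight of all vertices of a chain but the top one
is at most `y1` of the top vertex, and the vertex equation of the top vertex bounds the total by 1.
-/

lemma x_add_y1_le_y1_of_lt {D : Type*} [Preorder D]
    {x y0 y1 : D → ℝ} {yp : D → D → ℝ}
    (hyp : ∀ u v, u < v → 0 ≤ yp u v)
    (heq1 : ∀ v, x v + y0 v + y1 v = 1)
    (heq2 : ∀ u v, u < v → x u + x v + y1 u + yp u v + y0 v = 1)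
    {u v : D} (huv : u < v) :
    x u + y1 u ≤ y1 v := by
  linarith [hyp u v huv, heq1 v, heq2 u v huv]

lemma sum_castSucc_le_of_add_le_of_lt {D : Type*} [Preorder D] {x g : D → ℝ}
    (hg0 : ∀ v, 0 ≤ g v) (hg : ∀ u v, u < v → x u + g u ≤ g v) :
    ∀ {n : ℕ} {w : Fin (n + 1) → D}, StrictMono w →
      ∑ i : Fin n, x (w i.castSucc) ≤ g (w (Fin.last n))
  | 0, w, _ => by simpa using hg0 (w 0)
  | n + 1, w, hw => by
    have hprefix : ∑ i : Fin n, x (w i.castSucc.castSucc) ≤ g (w (Fin.last n).castSucc) :=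
      sum_castSucc_le_of_add_le_of_lt hg0 hg (hw.comp Fin.strictMono_castSucc)
    have hstep := hg _ _ (hw (Fin.castSucc_lt_last (Fin.last n)))
    rw [Fin.sum_univ_castSucc]
    linarith

theorem comparability_small_ef_clique_valid_general
    {D : Type*} [PartialOrder D]
    (x : D → ℝ) (y0 y1 : D → ℝ) (yp : D → D → ℝ)
    (hy0 : ∀ v, 0 ≤ y0 v) (hy1 : ∀ v, 0 ≤ y1 v)
    (hyp : ∀ u v, u < v → 0 ≤ yp u v)
    (heq1 : ∀ v, x v + y0 v + y1 v = 1)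
    (heq2 : ∀ u v, u < v → x u + x v + y1 u + yp u v + y0 v = 1)
    (k : ℕ) (v : Fin k → D) (hchain : ∀ i j : Fin k, i < j → v i < v j) :
    ∑ i, x (v i) ≤ 1 := by
  cases k with
  | zero => simp
  | succ m =>
    have hbelow_top : ∑ i : Fin m, x (v i.castSucc) ≤ y1 (v (Fin.last m)) :=
      sum_castSucc_le_of_add_le_of_lt hy1
        (fun _ _ => x_add_y1_le_y1_of_lt hyp heq1 heq2) hchain
    rw [Fin.sum_univ_castSucc]
    linarith [heq1 (v (Fin.last m)), hy0 (v (Fin.last m))]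

/-- For the small extended formulation of the stable set polytope of a comparability graph:
if `(x, y)` is non-negative and satisfies `x(v) + y(v,0) + y(v,1) = 1` for every vertex and
`x(u) + x(v) + y(u,1) + y(u,v) + y(v,0) = 1` for every comparable pair `u < v`, then
`x(C) ≤ 1` for every chain (clique) `C = {v₁ < ⋯ < v_k}`. -/
theorem comparability_small_ef_clique_valid
    {D : Type*} [PartialOrder D] [Fintype D]
    (x : D → ℝ) (y0 y1 : D → ℝ) (yp : D → D → ℝ)
    (hx : ∀ v, 0 ≤ x v) (hy0 : ∀ v, 0 ≤ y0 v) (hy1 : ∀ v, 0 ≤ y1 v)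
    (hyp : ∀ u v, u < v → 0 ≤ yp u v)
    (heq1 : ∀ v, x v + y0 v + y1 v = 1)
    (heq2 : ∀ u v, u < v → x u + x v + y1 u + yp u v + y0 v = 1)
    (k : ℕ) (v : Fin k → D) (hchain : ∀ i j : Fin k, i < j → v i < v j) :
    ∑ i, x (v i) ≤ 1 :=
  comparability_small_ef_clique_valid_general x y0 y1 yp hy0 hy1 hyp heq1 heq2 k v hchain
end

section
/- Let ℛ be a finite family of pairwise disjoint rectangles partitioning a matrix M (a set X × Y of index pairs). For a fixed entry (r,c), say a rectangle R ∈ ℛ is horizontally good if r is a row of R and R intersects horizontally (shares a row with) at most half of the rectangles in ℛ, and vertically good if c is a column of R and R intersects vertically at most half of the rectangles in ℛ. Then the unique rectangle R_{r,c} ∈ ℛ containing (r,c) is horizontally good or vertically good. -/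
/-! A rectangle `Q ≠ Rc` of the partition cannot share both a row and a column with `Rc`, since
it would then share an entry with it. So the rectangles meeting `Rc` horizontally and those meeting
it vertically form two disjoint subfamilies of `ℛ`; their sizes add up to at most `|ℛ|`, and the
smaller one is at most `|ℛ| / 2`. -/

theorem Set.ncard_sep_add_ncard_sep_le {α : Type*} (s : Finset α) {p q : α → Prop}
    (hpq : ∀ a ∈ s, p a → ¬ q a) :
    {a ∈ (s : Set α) | p a}.ncard + {a ∈ (s : Set α) | q a}.ncard ≤ s.card := by
  have hdisj : Disjoint {a ∈ (s : Set α) | p a} {a ∈ (s : Set α) | q a} :=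
    Set.disjoint_left.2 fun a ⟨ha, hp⟩ ⟨_, hq⟩ => hpq a ha hp hq
  rw [← Set.ncard_union_eq hdisj, ← Set.ncard_coe_finset]
  exact Set.ncard_le_ncard (Set.union_subset (Set.sep_subset _ _) (Set.sep_subset _ _))

theorem Set.not_inter_nonempty_of_disjoint_prod {X Y : Type*} {A C : Set X} {B D : Set Y}
    (h : Disjoint (A ×ˢ B) (C ×ˢ D)) (hAC : (A ∩ C).Nonempty) : ¬ (B ∩ D).Nonempty := by
  rw [← Set.not_disjoint_iff_nonempty_inter] at hAC
  exact fun hBD =>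
    Set.not_disjoint_iff_nonempty_inter.2 hBD ((Set.disjoint_prod.1 h).resolve_left hAC)

theorem containing_rectangle_is_good_general
    {X Y : Type*} (R : Finset (Set X × Set Y))
    (hdisj : ∀ R₁ ∈ R, ∀ R₂ ∈ R, R₁ ≠ R₂ → Disjoint (R₁.1 ×ˢ R₁.2) (R₂.1 ×ˢ R₂.2))
    (Rc : Set X × Set Y) (hRc : Rc ∈ R) :
    2 * {Q ∈ (R : Set (Set X × Set Y)) | Q ≠ Rc ∧ (Rc.1 ∩ Q.1).Nonempty}.ncard ≤ R.card ∨
    2 * {Q ∈ (R : Set (Set X × Set Y)) | Q ≠ Rc ∧ (Rc.2 ∩ Q.2).Nonempty}.ncard ≤ R.card := by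
  have hcard := Set.ncard_sep_add_ncard_sep_le R
    (p := fun Q => Q ≠ Rc ∧ (Rc.1 ∩ Q.1).Nonempty) (q := fun Q => Q ≠ Rc ∧ (Rc.2 ∩ Q.2).Nonempty)
    fun Q hQ ⟨hne, hrow⟩ ⟨_, hcol⟩ =>
      Set.not_inter_nonempty_of_disjoint_prod (hdisj Rc hRc Q hQ (Ne.symm hne)) hrow hcol
  omega

/-- Let `ℛ` be a finite family of pairwise disjoint rectangles (pairs `(I, J)` standing for
`I × J`) covering all of `X × Y`.  Then the rectangle containing a fixed entry `(r, c)` is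
horizontally good or vertically good: it shares a row (resp. a column) with at most half of
the other rectangles of `ℛ`. -/
theorem containing_rectangle_is_good
    {X Y : Type*} (R : Finset (Set X × Set Y))
    (hdisj : ∀ R₁ ∈ R, ∀ R₂ ∈ R, R₁ ≠ R₂ → Disjoint (R₁.1 ×ˢ R₁.2) (R₂.1 ×ˢ R₂.2))
    (hcov : ∀ p : X × Y, ∃ Q ∈ R, p.1 ∈ Q.1 ∧ p.2 ∈ Q.2)
    (r : X) (c : Y) (Rc : Set X × Set Y) (hRc : Rc ∈ R)
    (hr : r ∈ Rc.1) (hc : c ∈ Rc.2) :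
    2 * {Q ∈ (R : Set (Set X × Set Y)) | Q ≠ Rc ∧ (Rc.1 ∩ Q.1).Nonempty}.ncard ≤ R.card ∨
    2 * {Q ∈ (R : Set (Set X × Set Y)) | Q ≠ Rc ∧ (Rc.2 ∩ Q.2).Nonempty}.ncard ≤ R.card :=
  containing_rectangle_is_good_general R hdisj Rc hRc
end
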